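/- arXiv:1003.3722 — 3 statements merged into one kernel-verified Lean document; each statement's English description precedes it below -/
import Mathlib

section
/- For every J > 0, the function φ_J(t) = (1/2)·log(cosh(t+J)/cosh(t-J)) is concave on [0, ∞). -/
noncomputable def phi (J t : ℝ) : ℝ := (1/2) * Real.log (Real.cosh (t + J) / Real.cosh (t - J))

lemma hasDerivAt_logcosh (a t : ℝ) :
    HasDerivAt (fun t => Real.log (Real.cosh (t + a))) (Real.tanh (t + a)) t := by
  have h := (((hasDerivAt_id t).add_const a).cosh).log (Real.cosh_pos (x := t + a)).ne'
  simpa [Real.tanh_eq_sinh_div_cosh, mul_one] using h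

lemma hasDerivAt_tanh' (a t : ℝ) :
    HasDerivAt (fun t => Real.tanh (t + a)) (1 / Real.cosh (t + a) ^ 2) t := by
  have hs : HasDerivAt (fun t => Real.sinh (t + a)) (Real.cosh (t + a)) t := by
    simpa using ((hasDerivAt_id t).add_const a).sinh
  have hc : HasDerivAt (fun t => Real.cosh (t + a)) (Real.sinh (t + a)) t := by
    simpa using ((hasDerivAt_id t).add_const a).cosh
  have h := hs.div hc (Real.cosh_pos (x := t + a)).ne'
  have heq : (Real.cosh (t + a) * Real.cosh (t + a) - Real.sinh (t + a) * Real.sinh (t + a)) /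
      Real.cosh (t + a) ^ 2 = 1 / Real.cosh (t + a) ^ 2 := by
    rw [← Real.cosh_sq_sub_sinh_sq (t + a)]; ring
  have h' : HasDerivAt (fun t => Real.sinh (t + a) / Real.cosh (t + a))
      (1 / Real.cosh (t + a) ^ 2) t := heq ▸ h
  simpa [Real.tanh_eq_sinh_div_cosh] using h'

theorem phi_concave (J : ℝ) (hJ : 0 < J) : ConcaveOn ℝ (Set.Ici (0 : ℝ)) (phi J) := by
  have hphi : phi J = fun t =>
      (1/2) * (Real.log (Real.cosh (t + J)) - Real.log (Real.cosh (t - J))) := by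
    funext t
    rw [phi, Real.log_div (Real.cosh_pos _).ne' (Real.cosh_pos _).ne']
  rw [hphi]
  have hsub : ∀ t : ℝ, t - J = t + (-J) := fun t => sub_eq_add_neg t J
  refine concaveOn_of_hasDerivWithinAt2_nonpos (f' := fun t =>
      (1/2) * (Real.tanh (t + J) - Real.tanh (t - J)))
      (f'' := fun t => (1/2) * (1 / Real.cosh (t + J) ^ 2 - 1 / Real.cosh (t - J) ^ 2))
      (convex_Ici 0) ?_ ?_ ?_ ?_
  · fun_prop (disch := intro x; exact (Real.cosh_pos _).ne')
  · intro x hx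
    have h1 := hasDerivAt_logcosh J x
    have h2 : HasDerivAt (fun t => Real.log (Real.cosh (t - J))) (Real.tanh (x - J)) x := by
      simpa [← hsub] using hasDerivAt_logcosh (-J) x
    exact (((h1.sub h2).const_mul (1/2 : ℝ))).hasDerivWithinAt
  · intro x hx
    have h1 := hasDerivAt_tanh' J x
    have h2 : HasDerivAt (fun t => Real.tanh (t - J)) (1 / Real.cosh (x - J) ^ 2) x := by
      simpa [← hsub] using hasDerivAt_tanh' (-J) x
    exact (((h1.sub h2).const_mul (1/2 : ℝ))).hasDerivWithinAt
  · intro x hx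
    rw [interior_Ici] at hx
    have hx0 : (0 : ℝ) < x := hx
    have habs : |x - J| ≤ |x + J| := by
      rw [abs_of_pos (by linarith : (0:ℝ) < x + J)]
      rw [abs_sub_le_iff]; constructor <;> linarith
    have hc : Real.cosh (x - J) ≤ Real.cosh (x + J) := Real.cosh_le_cosh.2 habs
    have h1 : 1 / Real.cosh (x + J) ^ 2 ≤ 1 / Real.cosh (x - J) ^ 2 := by
      apply one_div_le_one_div_of_le (by positivity)
      exact pow_le_pow_left₀ (Real.cosh_pos _).le hc 2
    nlinarith
end

section
/- Fix an integer d ≥ 2, J > 0, and h ∈ ℝ. Suppose t_+ is the largest real solution of t = h + d·φ_J(t), where φ_J(t) = (1/2)·log(cosh(t+J)/cosh(t-J)). If h_n is a sequence with h_n ↓ h and t_n is the largest solution of t = h_n + d·φ_J(t), then t_n converges to t_+. (Right-continuity of the largest fixed point in h.) -/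
lemma phi_cont (J : ℝ) : Continuous (phi J) := by
  unfold phi
  apply continuous_const.mul
  apply Continuous.log
  · exact (Real.continuous_cosh.comp (continuous_id.add continuous_const)).div
      (Real.continuous_cosh.comp (continuous_id.sub continuous_const))
      (fun x => (Real.cosh_pos _).ne')
  · intro x
    exact (div_pos (Real.cosh_pos _) (Real.cosh_pos _)).ne'

lemma phi_le (J : ℝ) (hJ : 0 ≤ J) (t : ℝ) : phi J t ≤ J := by
  have hpos := Real.cosh_pos (t - J)
  have hpos2 := Real.cosh_pos (t + J)
  have h1 : Real.cosh (t + J) ≤ Real.exp (2*J) * Real.cosh (t - J) := by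
    rw [Real.cosh_eq, Real.cosh_eq]
    have e1 : Real.exp (t + J) = Real.exp (2*J) * Real.exp (t - J) := by
      rw [← Real.exp_add]; ring_nf
    have e2 : Real.exp (-(t + J)) ≤ Real.exp (2*J) * Real.exp (-(t - J)) := by
      rw [← Real.exp_add]
      exact Real.exp_le_exp.mpr (by linarith)
    linarith
  have hlog : Real.log (Real.cosh (t+J) / Real.cosh (t-J)) ≤ 2*J := by
    rw [Real.log_le_iff_le_exp (div_pos hpos2 hpos), div_le_iff₀ hpos]
    exact h1
  unfold phi; linarith

lemma sub_le_fixed (d : ℕ) (J h s : ℝ) (hJ : 0 < J) (hs : s ≤ h + d * phi J s) :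
    ∃ c, c = h + d * phi J c ∧ s ≤ c := by
  set M := max s (h + d * J) with hMdef
  have hphiM := phi_le J hJ.le M
  have hM2 : h + d*J ≤ M := le_max_right _ _
  have hM : h + d * phi J M - M ≤ 0 := by
    nlinarith [Nat.cast_nonneg (α := ℝ) d]
  have hsM : s ≤ M := le_max_left _ _
  have hcont : ContinuousOn (fun t => h + d * phi J t - t) (Set.Icc s M) :=
    ((continuous_const.add (continuous_const.mul (phi_cont J))).sub continuous_id).continuousOn
  have h0 : (0:ℝ) ∈ Set.Icc (h + d*phi J M - M) (h + d*phi J s - s) := ⟨hM, by linarith⟩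
  obtain ⟨c, hc, hc0⟩ := intermediate_value_Icc' hsM hcont h0
  simp only at hc0
  exact ⟨c, by linarith, hc.1⟩

theorem tplus_right_continuous (d : ℕ) (hd : 2 ≤ d) (J : ℝ) (hJ : 0 < J) (h : ℝ)
    (tp : ℝ) (htp : tp = h + d * phi J tp)
    (htpmax : ∀ s : ℝ, s = h + d * phi J s → s ≤ tp)
    (hn : ℕ → ℝ) (hanti : Antitone hn) (hgt : ∀ n, h ≤ hn n)
    (hlim : Filter.Tendsto hn Filter.atTop (nhds h))
    (tn : ℕ → ℝ) (htn : ∀ n, tn n = hn n + d * phi J (tn n))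
    (htnmax : ∀ n, ∀ s : ℝ, s = hn n + d * phi J s → s ≤ tn n) :
    Filter.Tendsto tn Filter.atTop (nhds tp) := by
  have htple : ∀ n, tp ≤ tn n := by
    intro n
    obtain ⟨c, hc, hsc⟩ := sub_le_fixed d J (hn n) tp hJ (by
      have := hgt n
      nlinarith [htp])
    exact hsc.trans (htnmax n c hc)
  have htna : Antitone tn := by
    intro m n hmn
    obtain ⟨c, hc, hsc⟩ := sub_le_fixed d J (hn m) (tn n) hJ (by
      have := hanti hmn
      nlinarith [htn n])
    exact hsc.trans (htnmax m c hc)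
  have hbdd : BddBelow (Set.range tn) := ⟨tp, by rintro x ⟨n, rfl⟩; exact htple n⟩
  have hconv : Filter.Tendsto tn Filter.atTop (nhds (⨅ n, tn n)) :=
    tendsto_atTop_ciInf htna hbdd
  have hL : (⨅ n, tn n) = tp := by
    have hge : tp ≤ ⨅ n, tn n := le_ciInf htple
    have hfix : (⨅ n, tn n) = h + d * phi J (⨅ n, tn n) := by
      have h2 : Filter.Tendsto (fun n => hn n + d * phi J (tn n)) Filter.atTop
          (nhds (h + d * phi J (⨅ n, tn n))) :=
        hlim.add (Filter.Tendsto.const_mul _ ((phi_cont J).continuousAt.tendsto.comp hconv))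
      have h3 : Filter.Tendsto tn Filter.atTop (nhds (h + d * phi J (⨅ n, tn n))) := by
        apply h2.congr
        intro n
        exact (htn n).symm
      exact tendsto_nhds_unique hconv h3
    exact le_antisymm (htpmax _ hfix) hge
  rwa [hL] at hconv
end

section
/- For real numbers c > 1 and J > 0 and an integer q ≥ 3 with e^{2J} ≥ q−2, the inequality c·e^{2J}/(c·e^{2J}+q−1) + e^{2J}/(c+e^{2J}+q−2) ≥ (c·e^{2J}+q−2)/(c·e^{2J}+q−1) holds. -/
theorem fuzzy_ineq (q : ℕ) (hq : 3 ≤ q) (J c : ℝ) (hJ : 0 < J)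
    (hqJ : (q : ℝ) - 2 ≤ Real.exp (2 * J)) (hc : 1 < c) :
    c * Real.exp (2 * J) / (c * Real.exp (2 * J) + q - 1) +
        Real.exp (2 * J) / (c + Real.exp (2 * J) + q - 2) ≥
      (c * Real.exp (2 * J) + q - 2) / (c * Real.exp (2 * J) + q - 1) := by
  have hE : 1 < Real.exp (2 * J) := by
    have h := Real.add_one_le_exp (2 * J)
    linarith
  set E := Real.exp (2 * J) with hEdef
  have hQ : (3 : ℝ) ≤ (q : ℝ) := by exact_mod_cast hq
  have hD1 : 0 < c * E + q - 1 := by nlinarith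
  have hD2 : 0 < c + E + q - 2 := by nlinarith
  rw [ge_iff_le, div_add_div _ _ (ne_of_gt hD1) (ne_of_gt hD2),
    div_le_div_iff₀ hD1 (mul_pos hD1 hD2)]
  nlinarith [mul_pos hD1 hD2,
    mul_nonneg (sub_nonneg.2 hqJ) (by linarith : (0:ℝ) ≤ E + (q - 2) + 1),
    mul_nonneg (sub_nonneg.2 hc.le) (by nlinarith : (0:ℝ) ≤ E * E - (q - 2))]
end
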